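/- Let r > 0, M > 0, λ > 0. Let f, g, f̃, g̃ ∈ C¹(ℝ³×ℝ³) have supports contained in B_r(0) and C¹-norms at most M. Define B(x) = −(1/(4πλ)) ∫_{ℝ³}∫_{ℝ³} |x−y|^{−1} ( w × ∂_v f(y,w) ) g(y,w) dw dy and B̃(x) analogously from f̃, g̃. Then there exists a constant C > 0 depending only on r and M such that sup_{x∈ℝ³} |B(x) − B̃(x)| ≤ (C/λ) ( ‖f − f̃‖_∞ + ‖g − g̃‖_∞ ). -/

import Mathlib

open MeasureTheory Set
open scoped Classical

noncomputable section

abbrev V3 : Type := Fin 3 → ℝ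
abbrev Z6 : Type := V3 × V3

def dot3 (a b : V3) : ℝ := ∑ i, a i * b i

def cross3 (a b : V3) : V3 :=
  ![a 1 * b 2 - a 2 * b 1, a 2 * b 0 - a 0 * b 2, a 0 * b 1 - a 1 * b 0]

def enorm3 (x : V3) : ℝ := Real.sqrt (∑ i, (x i) ^ 2)

def enorm6 (z : Z6) : ℝ := Real.sqrt (enorm3 z.1 ^ 2 + enorm3 z.2 ^ 2)

def grad3 (u : V3 → ℝ) (x : V3) : V3 := fun i => fderiv ℝ u x (Pi.single i 1)

def gradx (f : Z6 → ℝ) (z : Z6) : V3 := grad3 (fun x => f (x, z.2)) z.1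

def gradv (f : Z6 → ℝ) (z : Z6) : V3 := grad3 (fun v => f (z.1, v)) z.2

def rhoF (f : Z6 → ℝ) (x : V3) : ℝ := ∫ v : V3, f (x, v)

def psiF (f : Z6 → ℝ) (x : V3) : ℝ := ∫ y : V3, rhoF f y / enorm3 (x - y)

def PhiF (a f : Z6 → ℝ) (x : V3) : ℝ :=
  -∫ y : V3, ∫ w : V3, dot3 ((enorm3 (x - y) ^ 3)⁻¹ • (x - y)) (gradv a (y, w)) * f (y, w)

def supL2 (T : ℝ) (A : ℝ → V3 → V3) : ℝ :=
  Real.sqrt (∫ τ in (0:ℝ)..T, (⨆ x : V3, enorm3 (A τ x)) ^ 2)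

def zeta (T : ℝ) (A : ℝ → V3 → V3) (ρ : ℝ) : ℝ :=
  Real.exp (2 * T) * (ρ + Real.sqrt T * supL2 T A)

def charRHS (A B : ℝ → V3 → V3) (s : ℝ) (z : Z6) : Z6 :=
  (z.2, A s z.1 + cross3 z.2 (B s z.1))

def IsCharFlow (T : ℝ) (A B : ℝ → V3 → V3) (Z : ℝ → ℝ → Z6 → Z6) : Prop :=
  ∀ t ∈ Icc (0:ℝ) T, ∀ z : Z6, Z t t z = z ∧
    ∀ s ∈ Icc (0:ℝ) T,
      HasDerivWithinAt (fun σ => Z σ t z) (charRHS A B s (Z s t z)) (Icc (0:ℝ) T) s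

def FamC1bV (T : ℝ) (A : ℝ → V3 → V3) : Prop :=
  ContinuousOn (fun p : ℝ × V3 => A p.1 p.2) (Icc (0:ℝ) T ×ˢ (univ : Set V3)) ∧
  (∀ t ∈ Icc (0:ℝ) T, ContDiff ℝ 1 (A t)) ∧
  ContinuousOn (fun p : ℝ × V3 => fderiv ℝ (A p.1) p.2) (Icc (0:ℝ) T ×ˢ (univ : Set V3)) ∧
  ∃ M : ℝ, ∀ t ∈ Icc (0:ℝ) T, ∀ x : V3, enorm3 (A t x) ≤ M ∧ ‖fderiv ℝ (A t) x‖ ≤ M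

def FamC1γV (T γ : ℝ) (A : ℝ → V3 → V3) : Prop :=
  FamC1bV T A ∧
  ∃ L : ℝ, ∀ t ∈ Icc (0:ℝ) T, ∀ x y : V3,
    ‖fderiv ℝ (A t) x - fderiv ℝ (A t) y‖ ≤ L * enorm3 (x - y) ^ γ

def FamC1bZ (T : ℝ) (a : ℝ → Z6 → ℝ) : Prop :=
  ContinuousOn (fun p : ℝ × Z6 => a p.1 p.2) (Icc (0:ℝ) T ×ˢ (univ : Set Z6)) ∧
  (∀ t ∈ Icc (0:ℝ) T, ContDiff ℝ 1 (a t)) ∧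
  ContinuousOn (fun p : ℝ × Z6 => fderiv ℝ (a p.1) p.2) (Icc (0:ℝ) T ×ˢ (univ : Set Z6)) ∧
  ∃ M : ℝ, ∀ t ∈ Icc (0:ℝ) T, ∀ z : Z6, |a t z| ≤ M ∧ ‖fderiv ℝ (a t) z‖ ≤ M

def FamC1bZ3 (T : ℝ) (Cc : ℝ → Z6 → V3) : Prop :=
  ContinuousOn (fun p : ℝ × Z6 => Cc p.1 p.2) (Icc (0:ℝ) T ×ˢ (univ : Set Z6)) ∧
  (∀ t ∈ Icc (0:ℝ) T, ContDiff ℝ 1 (Cc t)) ∧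
  ContinuousOn (fun p : ℝ × Z6 => fderiv ℝ (Cc p.1) p.2) (Icc (0:ℝ) T ×ˢ (univ : Set Z6)) ∧
  ∃ M : ℝ, ∀ t ∈ Icc (0:ℝ) T, ∀ z : Z6, enorm3 (Cc t z) ≤ M ∧ ‖fderiv ℝ (Cc t) z‖ ≤ M

def SuppBall {α : Type*} [Zero α] (T r : ℝ) (f : ℝ → Z6 → α) : Prop :=
  ∀ t ∈ Icc (0:ℝ) T, ∀ z : Z6, r < enorm6 z → f t z = 0

def SuppBall0 {α : Type*} [Zero α] (r : ℝ) (u : Z6 → α) : Prop :=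
  ∀ z : Z6, r < enorm6 z → u z = 0

def IsCutoff (r₁ r₂ : ℝ) (χ : Z6 → ℝ) : Prop :=
  ContDiff ℝ 1 χ ∧ HasCompactSupport χ ∧ (∀ z, χ z ∈ Icc (0:ℝ) 1) ∧
  (∀ z : Z6, enorm6 z ≤ r₁ → χ z = 1) ∧ (∀ z : Z6, r₂ < enorm6 z → χ z = 0)

def vlasovRHS (a b : ℝ → Z6 → ℝ) (Cc : ℝ → Z6 → V3) (χ : Z6 → ℝ)
    (f : ℝ → Z6 → ℝ) (s : ℝ) (z : Z6) : ℝ :=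
  dot3 (grad3 (psiF (f s)) z.1) (Cc s z) + χ z * PhiF (a s) (f s) z.1 + b s z

def transportT (A B : ℝ → V3 → V3) (f : ℝ → Z6 → ℝ) (s : ℝ) (z : Z6) : ℝ :=
  dot3 z.2 (gradx (f s) z) + dot3 (A s z.1) (gradv (f s) z)
    + dot3 (cross3 z.2 (B s z.1)) (gradv (f s) z)

def IsC1on (T : ℝ) (f : ℝ → Z6 → ℝ) : Prop :=
  ContDiffOn ℝ 1 (fun p : ℝ × Z6 => f p.1 p.2) (Icc (0:ℝ) T ×ˢ (univ : Set Z6))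

def SolvesLinVlasov (T : ℝ) (a b : ℝ → Z6 → ℝ) (A B : ℝ → V3 → V3)
    (Cc : ℝ → Z6 → V3) (χ : Z6 → ℝ) (f : ℝ → Z6 → ℝ) : Prop :=
  ∀ t ∈ Icc (0:ℝ) T, ∀ z : Z6,
    HasDerivWithinAt (fun τ => f τ z)
      (vlasovRHS a b Cc χ f t z - transportT A B f t z) (Icc (0:ℝ) T) t

def fieldC1bNorm (u : V3 → V3) : ℝ :=
  (⨆ x : V3, enorm3 (u x)) + ⨆ x : V3, ‖fderiv ℝ u x‖

def fieldL2C1b (T : ℝ) (A : ℝ → V3 → V3) : ℝ :=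
  Real.sqrt (∫ τ in (0:ℝ)..T, fieldC1bNorm (A τ) ^ 2)

def holderSemi (γ : ℝ) (u : V3 → V3) : ℝ :=
  ⨆ p : Z6, (if p.1 = p.2 then 0
    else ‖fderiv ℝ u p.1 - fderiv ℝ u p.2‖ / enorm3 (p.1 - p.2) ^ γ)

def fieldL2C1γ (T γ : ℝ) (A : ℝ → V3 → V3) : ℝ :=
  Real.sqrt (∫ τ in (0:ℝ)..T, (fieldC1bNorm (A τ) + holderSemi γ (A τ)) ^ 2)

def fieldL2Linf (T : ℝ) (A : ℝ → V3 → V3) : ℝ := supL2 T A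

def fieldOf (lam : ℝ) (f g : Z6 → ℝ) (x : V3) : V3 :=
  (-(1 / (4 * Real.pi * lam))) •
    ∫ y : V3, ∫ w : V3, ((enorm3 (x - y))⁻¹ * g (y, w)) • cross3 w (gradv f (y, w))

/-!
The field is `-1/(4πλ)` times the Coulomb potential `∫ |x - y|⁻¹ J_{f,g}(y) dy` of the current
`J_{f,g}(y) = ∫ g(y, w) (w × ∂_v f(y, w)) dw`. Bilinearity gives
`J_{f,g} - J_{f̃,g̃} = J_{f̃, g - g̃} + J_{f - f̃, g}`, and integrating by parts in `w` turns the
last term into `-J_{g, f - f̃}`, with no derivative falling on `f - f̃`. Hence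
`|J_{f,g} - J_{f̃,g̃}| ≤ 2 r M |B_r| (‖f - f̃‖_∞ + ‖g - g̃‖_∞)`, and this difference vanishes for
`|y| > r`. On `|y| ≤ r` the kernel `|x - y|⁻¹` is dominated by `1_{|x - y| < 1} |x - y|⁻¹ + 1`,
whose integral is finite (`|z|⁻¹` is locally integrable in dimension `3`) and independent of `x`.
-/

open Metric

lemma enorm3_nonneg (v : V3) : 0 ≤ enorm3 v := Real.sqrt_nonneg _

lemma abs_apply_le_enorm3 (v : V3) (i : Fin 3) : |v i| ≤ enorm3 v := by
  rw [← Real.sqrt_sq_eq_abs]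
  exact Real.sqrt_le_sqrt (Finset.single_le_sum (fun j _ => sq_nonneg (v j)) (Finset.mem_univ i))

lemma norm_le_enorm3 (v : V3) : ‖v‖ ≤ enorm3 v :=
  (pi_norm_le_iff_of_nonneg (enorm3_nonneg v)).2 fun i => abs_apply_le_enorm3 v i

lemma enorm3_le_sqrt_three_mul_norm (v : V3) : enorm3 v ≤ √3 * ‖v‖ := by
  have h : ∑ i, v i ^ 2 ≤ ∑ _i : Fin 3, ‖v‖ ^ 2 := Finset.sum_le_sum fun i _ => by
    simpa only [sq_abs, Real.norm_eq_abs] using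
      pow_le_pow_left₀ (abs_nonneg _) (norm_le_pi_norm v i) 2
  calc enorm3 v ≤ √(3 * ‖v‖ ^ 2) := Real.sqrt_le_sqrt (by simpa using h)
    _ = √3 * ‖v‖ := by rw [Real.sqrt_mul (by norm_num), Real.sqrt_sq (norm_nonneg v)]

/-- `‖·‖` on `V3` is the sup norm, `enorm3` the Euclidean one; at `v = 0` both sides are
`0⁻¹ = 0`. -/
lemma inv_enorm3_le_inv_norm (v : V3) : (enorm3 v)⁻¹ ≤ ‖v‖⁻¹ := by
  rcases eq_or_ne v 0 with rfl | hv
  · simp [enorm3]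
  · exact inv_anti₀ (norm_pos_iff.2 hv) (norm_le_enorm3 v)

lemma enorm3_fst_le_enorm6 (z : Z6) : enorm3 z.1 ≤ enorm6 z :=
  Real.le_sqrt_of_sq_le (le_add_of_nonneg_right (sq_nonneg _))

lemma enorm3_snd_le_enorm6 (z : Z6) : enorm3 z.2 ≤ enorm6 z :=
  Real.le_sqrt_of_sq_le (le_add_of_nonneg_left (sq_nonneg _))

@[fun_prop]
lemma continuous_enorm3 : Continuous enorm3 := by
  unfold enorm3; fun_prop

lemma norm_cross3_le (a b : V3) : ‖cross3 a b‖ ≤ 2 * (‖a‖ * ‖b‖) := by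
  have hab : ∀ j k, |a j * b k - a k * b j| ≤ 2 * (‖a‖ * ‖b‖) := fun j k => by
    have h1 := norm_le_pi_norm a j; have h2 := norm_le_pi_norm b k
    have h3 := norm_le_pi_norm a k; have h4 := norm_le_pi_norm b j
    simp only [Real.norm_eq_abs] at h1 h2 h3 h4
    calc |a j * b k - a k * b j| ≤ |a j| * |b k| + |a k| * |b j| := by
          rw [← abs_mul, ← abs_mul]; exact abs_sub _ _
      _ ≤ ‖a‖ * ‖b‖ + ‖a‖ * ‖b‖ := by gcongr
      _ = 2 * (‖a‖ * ‖b‖) := by ring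
  refine (pi_norm_le_iff_of_nonneg (by positivity)).2 fun i => ?_
  fin_cases i
  exacts [hab 1 2, hab 2 0, hab 0 1]

@[fun_prop]
lemma Continuous.cross3 {α : Type*} [TopologicalSpace α] {f g : α → V3}
    (hf : Continuous f) (hg : Continuous g) : Continuous fun x => cross3 (f x) (g x) := by
  refine continuous_pi fun i => ?_
  fin_cases i <;> simp [_root_.cross3] <;> fun_prop

lemma cross3_sub_right (a u v : V3) : cross3 a (u - v) = cross3 a u - cross3 a v :=
  map_sub (crossProduct a) u v

lemma cross3_zero_right (a : V3) : cross3 a 0 = 0 := map_zero (crossProduct a)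

lemma grad3_sub {u u' : V3 → ℝ} {x : V3} (hu : DifferentiableAt ℝ u x)
    (hu' : DifferentiableAt ℝ u' x) :
    grad3 (fun x => u x - u' x) x = grad3 u x - grad3 u' x := by
  ext i
  simp [grad3, fderiv_fun_sub hu hu']

lemma gradv_eq_grad3 (a : Z6 → ℝ) (y w : V3) : gradv a (y, w) = grad3 (fun v => a (y, v)) w :=
  rfl

lemma gradv_apply {a : Z6 → ℝ} (ha : Differentiable ℝ a) (z : Z6) (i : Fin 3) :
    gradv a z i = fderiv ℝ a z (0, Pi.single i 1) := by
  have h := (ha z).hasFDerivAt.comp z.2 (hasFDerivAt_prodMk_right (𝕜 := ℝ) z.1 z.2)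
  exact congrArg (· (Pi.single i 1)) h.fderiv

lemma abs_gradv_le {a : Z6 → ℝ} (ha : Differentiable ℝ a) (z : Z6) (i : Fin 3) :
    |gradv a z i| ≤ ‖fderiv ℝ a z‖ := by
  simpa [gradv_apply ha, Pi.norm_single] using
    (fderiv ℝ a z).le_opNorm ((0, Pi.single i 1) : Z6)

lemma norm_gradv_le {a : Z6 → ℝ} (ha : Differentiable ℝ a) (z : Z6) :
    ‖gradv a z‖ ≤ ‖fderiv ℝ a z‖ :=
  (pi_norm_le_iff_of_nonneg (norm_nonneg _)).2 (abs_gradv_le ha z)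

lemma continuous_gradv {a : Z6 → ℝ} (ha : ContDiff ℝ 1 a) : Continuous (gradv a) := by
  refine continuous_pi fun i => ?_
  simp_rw [gradv_apply (ha.differentiable one_ne_zero)]
  exact (ha.continuous_fderiv one_ne_zero).clm_apply continuous_const

section IntegrationByParts

variable {φ ψ : V3 → ℝ}

lemma continuous_grad3 (hφ : ContDiff ℝ 1 φ) : Continuous (grad3 φ) :=
  continuous_pi fun _ => (hφ.continuous_fderiv one_ne_zero).clm_apply continuous_const

lemma HasCompactSupport.grad3 (hφc : HasCompactSupport φ) : HasCompactSupport (grad3 φ) :=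
  show HasCompactSupport ((fun (L : V3 →L[ℝ] ℝ) (i : Fin 3) => L (Pi.single i 1)) ∘ fderiv ℝ φ)
    from (hφc.fderiv (𝕜 := ℝ)).comp_left rfl

lemma integral_mul_coord_mul_grad3 (hφ : ContDiff ℝ 1 φ) (hψ : ContDiff ℝ 1 ψ)
    (hφc : HasCompactSupport φ) {j k : Fin 3} (hjk : j ≠ k) :
    ∫ w, ψ w * (w j * grad3 φ w k) = -∫ w, φ w * (w j * grad3 ψ w k) := by
  set F : V3 → ℝ := fun w => ψ w * w j
  have hF : ContDiff ℝ 1 F := hψ.mul (contDiff_apply ℝ ℝ j)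
  -- the coordinate `w j` is constant in the direction `e k`, so only `ψ` is differentiated
  have hdF : ∀ w, fderiv ℝ F w (Pi.single k 1) = w j * grad3 ψ w k := fun w => by
    have hproj : fderiv ℝ (fun f : V3 => f j) w = ContinuousLinearMap.proj j :=
      (ContinuousLinearMap.proj (R := ℝ) (φ := fun _ : Fin 3 => ℝ) j).fderiv
    rw [fderiv_fun_mul (hψ.differentiable one_ne_zero w) (differentiableAt_apply j w)]
    simp [grad3, hproj, hjk.symm]
  have hφ' : HasCompactSupport fun w => fderiv ℝ φ w (Pi.single k 1) :=
    hφc.fderiv_apply (𝕜 := ℝ) _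
  have key := integral_mul_fderiv_eq_neg_fderiv_mul_of_integrable (μ := volume)
    (f := F) (g := φ) (v := Pi.single k 1)
    (((hF.continuous_fderiv one_ne_zero).clm_apply continuous_const).mul hφ.continuous
      |>.integrable_of_hasCompactSupport hφc.mul_left)
    ((hF.continuous.mul ((hφ.continuous_fderiv one_ne_zero).clm_apply continuous_const))
      |>.integrable_of_hasCompactSupport hφ'.mul_left)
    ((hF.continuous.mul hφ.continuous).integrable_of_hasCompactSupport hφc.mul_left)
    (fun w _ => hF.differentiable one_ne_zero w) (fun w _ => hφ.differentiable one_ne_zero w)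
  simp only [hdF] at key
  calc ∫ w, ψ w * (w j * grad3 φ w k) = ∫ w, F w * fderiv ℝ φ w (Pi.single k 1) := by
        simp only [F, grad3, mul_assoc]
    _ = -∫ w, φ w * (w j * grad3 ψ w k) := by
        simp only [key, mul_comm]

lemma integrable_smul_cross3_grad3 (hφ : ContDiff ℝ 1 φ) (hφc : HasCompactSupport φ)
    (hψ : Continuous ψ) : Integrable fun w => ψ w • cross3 w (grad3 φ w) := by
  refine (hψ.smul (continuous_id.cross3 (continuous_grad3 hφ))).integrable_of_hasCompactSupport
    (hφc.grad3.mono ?_)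
  refine Function.support_subset_iff'.2 fun w hw => ?_
  simp [Function.notMem_support.1 hw, cross3_zero_right]

lemma integral_mul_cross3_component (hφ : ContDiff ℝ 1 φ) (hψ : ContDiff ℝ 1 ψ)
    (hφc : HasCompactSupport φ) {j k : Fin 3} (hjk : j ≠ k) :
    ∫ w, ψ w * (w j * grad3 φ w k - w k * grad3 φ w j)
      = -∫ w, φ w * (w j * grad3 ψ w k - w k * grad3 ψ w j) := by
  have hint_ψ : ∀ j k : Fin 3, Integrable fun w => ψ w * (w j * grad3 φ w k) := fun j k =>
    (hψ.continuous.mul ((continuous_apply j).mul ((continuous_apply k).comp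
      (continuous_grad3 hφ)))).integrable_of_hasCompactSupport
      ((hφc.grad3.comp_left (g := fun g : V3 => g k) rfl).mul_left.mul_left)
  have hint_φ : ∀ j k : Fin 3, Integrable fun w => φ w * (w j * grad3 ψ w k) := fun j k =>
    (hφ.continuous.mul ((continuous_apply j).mul ((continuous_apply k).comp
      (continuous_grad3 hψ)))).integrable_of_hasCompactSupport hφc.mul_right
  simp only [mul_sub]
  rw [integral_sub (hint_ψ j k) (hint_ψ k j), integral_sub (hint_φ j k) (hint_φ k j),
    integral_mul_coord_mul_grad3 hφ hψ hφc hjk, integral_mul_coord_mul_grad3 hφ hψ hφc hjk.symm]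
  ring

theorem integral_smul_cross3_grad3_swap (hφ : ContDiff ℝ 1 φ) (hψ : ContDiff ℝ 1 ψ)
    (hφc : HasCompactSupport φ) :
    ∫ w, ψ w • cross3 w (grad3 φ w) = -∫ w, φ w • cross3 w (grad3 ψ w) := by
  have hint : Integrable fun w => φ w • cross3 w (grad3 ψ w) :=
    (hφ.continuous.smul (continuous_id.cross3 (continuous_grad3 hψ)))
      |>.integrable_of_hasCompactSupport hφc.smul_right
  ext i
  rw [eval_integral (integrable_smul_cross3_grad3 hφ hφc hψ.continuous).eval, Pi.neg_apply,
    eval_integral hint.eval]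
  fin_cases i <;> simp only [Pi.smul_apply, smul_eq_mul, cross3] <;>
    exact integral_mul_cross3_component hφ hψ hφc (by decide)

end IntegrationByParts

namespace SuppBall0

variable {r : ℝ} {a b : Z6 → ℝ}

lemma apply_eq_zero_of_lt_norm_snd (ha : SuppBall0 r a) {y w : V3} (hw : r < ‖w‖) :
    a (y, w) = 0 :=
  ha _ (hw.trans_le ((norm_le_enorm3 w).trans (enorm3_snd_le_enorm6 (y, w))))

lemma apply_eq_zero_of_lt_norm_fst (ha : SuppBall0 r a) {y w : V3} (hy : r < ‖y‖) :
    a (y, w) = 0 :=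
  ha _ (hy.trans_le ((norm_le_enorm3 y).trans (enorm3_fst_le_enorm6 (y, w))))

lemma hasCompactSupport_slice (ha : SuppBall0 r a) (y : V3) :
    HasCompactSupport fun w => a (y, w) :=
  HasCompactSupport.intro (isCompact_closedBall 0 r) fun _ hw =>
    ha.apply_eq_zero_of_lt_norm_snd (by simpa using hw)

lemma sub (ha : SuppBall0 r a) (hb : SuppBall0 r b) : SuppBall0 r fun z => a z - b z :=
  fun z hz => show a z - b z = 0 by rw [ha z hz, hb z hz, sub_zero]

end SuppBall0

def crossCurrent (a b : Z6 → ℝ) (y : V3) : V3 := ∫ w, b (y, w) • cross3 w (gradv a (y, w))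

section CrossCurrent

variable {r : ℝ} {a b f f' g g' : Z6 → ℝ}

lemma contDiff_slice (ha : ContDiff ℝ 1 a) (y : V3) : ContDiff ℝ 1 fun w => a (y, w) :=
  ha.comp (contDiff_const.prodMk contDiff_id)

lemma crossCurrent_swap (ha : ContDiff ℝ 1 a) (hb : ContDiff ℝ 1 b) (has : SuppBall0 r a)
    (y : V3) : crossCurrent a b y = -crossCurrent b a y :=
  integral_smul_cross3_grad3_swap (contDiff_slice ha y) (contDiff_slice hb y)
    (has.hasCompactSupport_slice y)

lemma integrable_crossCurrent_integrand (ha : ContDiff ℝ 1 a) (has : SuppBall0 r a)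
    (hb : Continuous b) (y : V3) :
    Integrable fun w => b (y, w) • cross3 w (gradv a (y, w)) :=
  integrable_smul_cross3_grad3 (φ := fun w => a (y, w)) (ψ := fun w => b (y, w))
    (contDiff_slice ha y) (has.hasCompactSupport_slice y)
    (hb.comp (Continuous.prodMk_right y))

lemma crossCurrent_sub_left (hf : ContDiff ℝ 1 f) (hf' : ContDiff ℝ 1 f') (hfs : SuppBall0 r f)
    (hf's : SuppBall0 r f') (hg : Continuous g) (y : V3) :
    crossCurrent (fun z => f z - f' z) g y = crossCurrent f g y - crossCurrent f' g y := by
  rw [crossCurrent, crossCurrent, crossCurrent, ← integral_sub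
    (integrable_crossCurrent_integrand hf hfs hg y)
    (integrable_crossCurrent_integrand hf' hf's hg y)]
  congr 1 with w
  rw [gradv_eq_grad3, grad3_sub ((contDiff_slice hf y).differentiable one_ne_zero w)
    ((contDiff_slice hf' y).differentiable one_ne_zero w), cross3_sub_right, smul_sub]
  rfl

lemma crossCurrent_sub_right (ha : ContDiff ℝ 1 a) (has : SuppBall0 r a) (hg : Continuous g)
    (hg' : Continuous g') (y : V3) :
    crossCurrent a (fun z => g z - g' z) y = crossCurrent a g y - crossCurrent a g' y := by
  rw [crossCurrent, crossCurrent, crossCurrent, ← integral_sub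
    (integrable_crossCurrent_integrand ha has hg y)
    (integrable_crossCurrent_integrand ha has hg' y)]
  simp only [sub_smul]

lemma crossCurrent_sub_crossCurrent (hf : ContDiff ℝ 1 f) (hf' : ContDiff ℝ 1 f')
    (hg : ContDiff ℝ 1 g) (hg' : Continuous g') (hfs : SuppBall0 r f) (hf's : SuppBall0 r f')
    (y : V3) :
    crossCurrent f g y - crossCurrent f' g' y
      = crossCurrent f' (fun z => g z - g' z) y - crossCurrent g (fun z => f z - f' z) y := by
  rw [crossCurrent_sub_right hf' hf's hg.continuous hg', sub_eq_add_neg _ (crossCurrent g _ y),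
    ← crossCurrent_swap (hf.sub hf') hg (hfs.sub hf's), crossCurrent_sub_left hf hf' hfs hf's
    hg.continuous]
  abel

lemma norm_crossCurrent_le (ha : Differentiable ℝ a) (hb : SuppBall0 r b) {S Ma : ℝ}
    (hbS : ∀ z, |b z| ≤ S) (haM : ∀ z, ‖fderiv ℝ a z‖ ≤ Ma) (y : V3) :
    ‖crossCurrent a b y‖ ≤ 2 * r * Ma * S * volume.real (closedBall (0 : V3) r) := by
  have hout : ∀ w ∉ closedBall (0 : V3) r, b (y, w) • cross3 w (gradv a (y, w)) = 0 :=
    fun w hw => by rw [hb.apply_eq_zero_of_lt_norm_snd (by simpa using hw), zero_smul]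
  rw [crossCurrent, ← setIntegral_eq_integral_of_forall_compl_eq_zero hout]
  refine norm_setIntegral_le_of_norm_le_const measure_closedBall_lt_top fun w hw => ?_
  have hS : 0 ≤ S := (abs_nonneg _).trans (hbS 0)
  calc ‖b (y, w) • cross3 w (gradv a (y, w))‖
      ≤ S * (2 * (‖w‖ * ‖gradv a (y, w)‖)) := by
        rw [norm_smul, Real.norm_eq_abs]
        exact mul_le_mul (hbS _) (norm_cross3_le _ _) (norm_nonneg _) hS
    _ ≤ S * (2 * (r * Ma)) := by
        have hwr : ‖w‖ ≤ r := mem_closedBall_zero_iff.1 hw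
        have hr : 0 ≤ r := (norm_nonneg w).trans hwr
        have hgrad : ‖gradv a (y, w)‖ ≤ Ma := (norm_gradv_le ha _).trans (haM _)
        gcongr
    _ = 2 * r * Ma * S := by ring

lemma crossCurrent_eq_zero_of_lt_norm (hb : SuppBall0 r b) {y : V3} (hy : r < ‖y‖) :
    crossCurrent a b y = 0 := by
  simp [crossCurrent, hb.apply_eq_zero_of_lt_norm_fst hy]

lemma aestronglyMeasurable_crossCurrent (ha : ContDiff ℝ 1 a) (hb : Continuous b) :
    AEStronglyMeasurable (crossCurrent a b) :=
  (Continuous.stronglyMeasurable (by have := continuous_gradv ha; fun_prop :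
    Continuous fun p : V3 × V3 => b p • cross3 p.2 (gradv a p))).integral_prod_right'
    |>.aestronglyMeasurable

end CrossCurrent

section SingularKernel

variable {E F : Type*} [NormedAddCommGroup E] [NormedAddCommGroup F] [NormedSpace ℝ F]

def inverseDistanceMajorant (r : ℝ) (x y : E) : ℝ :=
  (ball (0 : E) 1).indicator (fun z => ‖z‖⁻¹) (x - y) + (closedBall (0 : E) r).indicator 1 y

lemma inv_norm_le_inverseDistanceMajorant {r : ℝ} {x y : E} (hy : ‖y‖ ≤ r) :
    ‖x - y‖⁻¹ ≤ inverseDistanceMajorant r x y := by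
  rw [inverseDistanceMajorant, indicator_of_mem (mem_closedBall_zero_iff.2 hy), Pi.one_apply]
  by_cases hxy : x - y ∈ ball 0 1
  · rw [indicator_of_mem hxy]
    exact le_add_of_nonneg_right zero_le_one
  · rw [indicator_of_notMem hxy, zero_add]
    exact inv_le_one_of_one_le₀ (by simpa using hxy)

lemma inverseDistanceMajorant_nonneg (r : ℝ) (x y : E) : 0 ≤ inverseDistanceMajorant r x y :=
  add_nonneg (indicator_nonneg (fun _ _ => inv_nonneg.2 (norm_nonneg _)) _)
    (indicator_nonneg (fun _ _ => zero_le_one) _)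

variable {k : E → ℝ} {J : E → F} {K r : ℝ}

lemma norm_kernel_smul_le (hk0 : ∀ z, 0 ≤ k z) (hk : ∀ z, k z ≤ ‖z‖⁻¹)
    (hJK : ∀ y, ‖J y‖ ≤ K) (hJ0 : ∀ y, r < ‖y‖ → J y = 0) (x y : E) :
    ‖k (x - y) • J y‖ ≤ K * inverseDistanceMajorant r x y := by
  have hK : 0 ≤ K := (norm_nonneg _).trans (hJK 0)
  rcases lt_or_ge r ‖y‖ with hy | hy
  · rw [hJ0 y hy, smul_zero, norm_zero]
    exact mul_nonneg hK (inverseDistanceMajorant_nonneg r x y)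
  · rw [norm_smul, Real.norm_of_nonneg (hk0 _), mul_comm]
    exact mul_le_mul (hJK y) ((hk _).trans (inv_norm_le_inverseDistanceMajorant hy))
      (hk0 _) hK

variable [NormedSpace ℝ E] [FiniteDimensional ℝ E] [MeasurableSpace E] [BorelSpace E]
  {μ : Measure E} [μ.IsAddHaarMeasure]

lemma integrableOn_ball_inv_norm (hd : 1 < Module.finrank ℝ E) (ρ : ℝ) :
    IntegrableOn (fun z : E => ‖z‖⁻¹) (ball 0 ρ) μ :=
  integrableOn_ball_of_norm_le_rpow hd.le (C := 1) (α := 1) (by exact_mod_cast hd)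
    (Filter.Eventually.of_forall fun z => by simp [Real.rpow_neg_one])
    (by fun_prop : Continuous fun z : E => ‖z‖).measurable.inv.aestronglyMeasurable

lemma integrable_indicator_ball_inv_norm (hd : 1 < Module.finrank ℝ E) :
    Integrable ((ball (0 : E) 1).indicator fun z => ‖z‖⁻¹) μ :=
  (integrableOn_ball_inv_norm hd 1).integrable_indicator measurableSet_ball

lemma integrable_indicator_closedBall_one (r : ℝ) :
    Integrable ((closedBall (0 : E) r).indicator (1 : E → ℝ)) μ :=
  (integrableOn_const measure_closedBall_lt_top.ne).integrable_indicator measurableSet_closedBall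

lemma integrable_inverseDistanceMajorant (hd : 1 < Module.finrank ℝ E) (r : ℝ) (x : E) :
    Integrable (inverseDistanceMajorant r x) μ :=
  ((integrable_indicator_ball_inv_norm hd).comp_sub_left x).add
    (integrable_indicator_closedBall_one r)

lemma integral_inverseDistanceMajorant (hd : 1 < Module.finrank ℝ E) (r : ℝ) (x : E) :
    ∫ y, inverseDistanceMajorant r x y ∂μ
      = ∫ z in ball (0 : E) 1, ‖z‖⁻¹ ∂μ + μ.real (closedBall (0 : E) r) := by
  unfold inverseDistanceMajorant
  rw [integral_add ((integrable_indicator_ball_inv_norm hd).comp_sub_left x)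
    (integrable_indicator_closedBall_one r),
    integral_sub_left_eq_self (fun z => (ball (0 : E) 1).indicator (fun z => ‖z‖⁻¹) z) μ x,
    integral_indicator measurableSet_ball, integral_indicator_one measurableSet_closedBall]

theorem integrable_kernel_smul (hd : 1 < Module.finrank ℝ E) (hk : Measurable k)
    (hk0 : ∀ z, 0 ≤ k z) (hkle : ∀ z, k z ≤ ‖z‖⁻¹) (hJ : AEStronglyMeasurable J μ)
    (hJK : ∀ y, ‖J y‖ ≤ K) (hJ0 : ∀ y, r < ‖y‖ → J y = 0) (x : E) :
    Integrable (fun y => k (x - y) • J y) μ :=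
  ((integrable_inverseDistanceMajorant hd r x).const_mul K).mono'
    (((hk.comp (measurable_const.sub measurable_id)).aestronglyMeasurable).smul hJ)
    (Filter.Eventually.of_forall (norm_kernel_smul_le hk0 hkle hJK hJ0 x))

theorem norm_integral_kernel_smul_le (hd : 1 < Module.finrank ℝ E) (hk0 : ∀ z, 0 ≤ k z)
    (hkle : ∀ z, k z ≤ ‖z‖⁻¹) (hJK : ∀ y, ‖J y‖ ≤ K) (hJ0 : ∀ y, r < ‖y‖ → J y = 0) (x : E) :
    ‖∫ y, k (x - y) • J y ∂μ‖
      ≤ K * (∫ z in ball (0 : E) 1, ‖z‖⁻¹ ∂μ + μ.real (closedBall (0 : E) r)) := by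
  rw [← integral_inverseDistanceMajorant hd r x, ← integral_const_mul]
  exact norm_integral_le_of_norm_le ((integrable_inverseDistanceMajorant hd r x).const_mul K)
    (Filter.Eventually.of_forall (norm_kernel_smul_le hk0 hkle hJK hJ0 x))

end SingularKernel

structure C1BoundedInBall (r M : ℝ) (f : Z6 → ℝ) : Prop where
  contDiff : ContDiff ℝ 1 f
  suppBall : SuppBall0 r f
  bound : ∀ z, |f z| ≤ M ∧ ‖fderiv ℝ f z‖ ≤ M

section FieldEstimate

variable {r M : ℝ} {f g f' g' : Z6 → ℝ}

lemma abs_sub_le_iSup_abs_sub (hf : C1BoundedInBall r M f) (hf' : C1BoundedInBall r M f')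
    (z : Z6) : |f z - f' z| ≤ ⨆ z, |f z - f' z| :=
  le_ciSup ⟨2 * M, forall_mem_range.2 fun z => (abs_sub _ _).trans <|
    (add_le_add (hf.bound z).1 (hf'.bound z).1).trans_eq (two_mul M).symm⟩ z

lemma norm_crossCurrent_sub_le (hf : C1BoundedInBall r M f) (hg : C1BoundedInBall r M g)
    (hf' : C1BoundedInBall r M f') (hg' : C1BoundedInBall r M g') (y : V3) :
    ‖crossCurrent f g y - crossCurrent f' g' y‖
      ≤ 2 * r * M * ((⨆ z, |f z - f' z|) + ⨆ z, |g z - g' z|)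
        * volume.real (closedBall (0 : V3) r) := by
  rw [crossCurrent_sub_crossCurrent hf.contDiff hf'.contDiff hg.contDiff hg'.contDiff.continuous
    hf.suppBall hf'.suppBall]
  refine (norm_sub_le _ _).trans ?_
  have hgg' := norm_crossCurrent_le (hf'.contDiff.differentiable one_ne_zero)
    (hg.suppBall.sub hg'.suppBall) (abs_sub_le_iSup_abs_sub hg hg') (fun z => (hf'.bound z).2) y
  have hff' := norm_crossCurrent_le (hg.contDiff.differentiable one_ne_zero)
    (hf.suppBall.sub hf'.suppBall) (abs_sub_le_iSup_abs_sub hf hf') (fun z => (hg.bound z).2) y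
  linarith

lemma inv_enorm3_nonneg (v : V3) : 0 ≤ (enorm3 v)⁻¹ := inv_nonneg.2 (enorm3_nonneg v)

lemma one_lt_finrank_V3 : 1 < Module.finrank ℝ V3 := by
  rw [Module.finrank_fin_fun]; norm_num

lemma integrable_inv_enorm3_smul_crossCurrent (hf : C1BoundedInBall r M f)
    (hg : C1BoundedInBall r M g) (x : V3) :
    Integrable fun y => (enorm3 (x - y))⁻¹ • crossCurrent f g y :=
  integrable_kernel_smul one_lt_finrank_V3 continuous_enorm3.measurable.inv inv_enorm3_nonneg
    inv_enorm3_le_inv_norm (aestronglyMeasurable_crossCurrent hf.contDiff hg.contDiff.continuous)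
    (norm_crossCurrent_le (hf.contDiff.differentiable one_ne_zero) hg.suppBall
      (fun z => (hg.bound z).1) (fun z => (hf.bound z).2))
    (fun _ hy => crossCurrent_eq_zero_of_lt_norm hg.suppBall hy) x

lemma fieldOf_eq (lam : ℝ) (f g : Z6 → ℝ) (x : V3) :
    fieldOf lam f g x
      = (-(1 / (4 * Real.pi * lam))) • ∫ y, (enorm3 (x - y))⁻¹ • crossCurrent f g y := by
  simp only [fieldOf, crossCurrent, ← integral_smul, mul_smul]

def fieldLipschitzConst (r M : ℝ) : ℝ :=
  √3 / (4 * Real.pi) * (2 * r * M * volume.real (closedBall (0 : V3) r))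
    * ((∫ z in ball (0 : V3) 1, ‖z‖⁻¹) + volume.real (closedBall (0 : V3) r))

lemma fieldLipschitzConst_pos (hr : 0 < r) (hM : 0 < M) : 0 < fieldLipschitzConst r M := by
  have hvol : 0 < volume.real (closedBall (0 : V3) r) :=
    ENNReal.toReal_pos (measure_closedBall_pos _ _ hr).ne' measure_closedBall_lt_top.ne
  have hsing : 0 ≤ ∫ z in ball (0 : V3) 1, ‖z‖⁻¹ :=
    setIntegral_nonneg measurableSet_ball fun _ _ => inv_nonneg.2 (norm_nonneg _)
  unfold fieldLipschitzConst
  exact mul_pos (mul_pos (by positivity) (by positivity)) (by linarith)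

theorem enorm3_fieldOf_sub_le {lam : ℝ} (hlam : 0 < lam) (hf : C1BoundedInBall r M f)
    (hg : C1BoundedInBall r M g) (hf' : C1BoundedInBall r M f') (hg' : C1BoundedInBall r M g')
    (x : V3) :
    enorm3 (fieldOf lam f g x - fieldOf lam f' g' x)
      ≤ fieldLipschitzConst r M / lam * ((⨆ z, |f z - f' z|) + ⨆ z, |g z - g' z|) := by
  have hpot := norm_integral_kernel_smul_le (μ := volume) one_lt_finrank_V3 inv_enorm3_nonneg
    inv_enorm3_le_inv_norm (norm_crossCurrent_sub_le hf hg hf' hg')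
    (fun y hy => by rw [crossCurrent_eq_zero_of_lt_norm hg.suppBall hy,
      crossCurrent_eq_zero_of_lt_norm hg'.suppBall hy, sub_zero]) x
  rw [fieldOf_eq, fieldOf_eq, ← smul_sub, ← integral_sub
    (integrable_inv_enorm3_smul_crossCurrent hf hg x)
    (integrable_inv_enorm3_smul_crossCurrent hf' hg' x)]
  simp_rw [← smul_sub]
  refine (enorm3_le_sqrt_three_mul_norm _).trans ?_
  rw [norm_smul, norm_neg, Real.norm_of_nonneg (by positivity)]
  calc √3 * (1 / (4 * Real.pi * lam) * _)
      ≤ √3 * (1 / (4 * Real.pi * lam) * (2 * r * M * ((⨆ z, |f z - f' z|) + ⨆ z, |g z - g' z|)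
          * volume.real (closedBall (0 : V3) r)
          * ((∫ z in ball (0 : V3) 1, ‖z‖⁻¹) + volume.real (closedBall (0 : V3) r)))) := by
        gcongr
    _ = _ := by unfold fieldLipschitzConst; field_simp

end FieldEstimate

/-- Lipschitz dependence of the reconstructed magnetic field
`B = −(1/(4πλ)) ∫∫ |x−y|⁻¹ (w × ∂_v f) g dw dy` on `(f,g)`:
`sup_x |B − B̃| ≤ (C/λ)(‖f − f̃‖_∞ + ‖g − g̃‖_∞)` with `C = C(r,M)`. -/
theorem field_formula_lipschitz
    (r M : ℝ) (hr : 0 < r) (hM : 0 < M) :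
    ∃ C > (0:ℝ), ∀ lam : ℝ, 0 < lam →
      ∀ f g f' g' : Z6 → ℝ,
        ContDiff ℝ 1 f → SuppBall0 r f → (∀ z, |f z| ≤ M ∧ ‖fderiv ℝ f z‖ ≤ M) →
        ContDiff ℝ 1 g → SuppBall0 r g → (∀ z, |g z| ≤ M ∧ ‖fderiv ℝ g z‖ ≤ M) →
        ContDiff ℝ 1 f' → SuppBall0 r f' → (∀ z, |f' z| ≤ M ∧ ‖fderiv ℝ f' z‖ ≤ M) →
        ContDiff ℝ 1 g' → SuppBall0 r g' → (∀ z, |g' z| ≤ M ∧ ‖fderiv ℝ g' z‖ ≤ M) →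
        ∀ x : V3,
          enorm3 (fieldOf lam f g x - fieldOf lam f' g' x)
            ≤ C / lam * ((⨆ z : Z6, |f z - f' z|) + ⨆ z : Z6, |g z - g' z|) := by
  refine ⟨fieldLipschitzConst r M, fieldLipschitzConst_pos hr hM, ?_⟩
  intro lam hlam f g f' g' hf hfs hfM hg hgs hgM hf' hf's hf'M hg' hg's hg'M x
  exact enorm3_fieldOf_sub_le hlam ⟨hf, hfs, hfM⟩ ⟨hg, hgs, hgM⟩ ⟨hf', hf's, hf'M⟩
    ⟨hg', hg's, hg'M⟩ x

end
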